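/- Let n ≥ 1, let y₁,…,yₙ ∈ (0,1), and let λ ∈ (−1,0). Then for every θ > 0 the score function satisfies the two-sided bound n/θ + 2·Σ_{i=1}^n log yᵢ < ψ(θ) < n/θ + Σ_{i=1}^n log yᵢ. Consequently ψ(θ) > 0 whenever 0 < θ < n/(−2·Σ_{i=1}^n log yᵢ), and ψ(θ) < 0 whenever θ > n/(−Σ_{i=1}^n log yᵢ). -/

import Mathlib

open Real Finset

/-
Writing `ψ(θ) = n/θ + Σ log yᵢ − Σ cᵢ`, each correction `cᵢ = 2λ yᵢ^θ log yᵢ / (1 + λ − 2λ yᵢ^θ)`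
lies strictly between `0` and `−log yᵢ`: for `λ ∈ (−1, 0)` the denominator exceeds `1 + λ > 0`,
so `cᵢ = w · log yᵢ` with weight `w = 2λ yᵢ^θ / (1 + λ − 2λ yᵢ^θ) ∈ (−1, 0)`. Summing gives the
two-sided bound, and the sign statements follow because `Σ log yᵢ < 0`.
-/

/-- The profile score function for the shape parameter `θ` of the GTLD:
`ψ(θ) = n/θ + Σᵢ log yᵢ − 2λ Σᵢ yᵢ^θ log yᵢ/(1 + λ − 2λ yᵢ^θ)`. -/
noncomputable def psi (n : ℕ) (y : Fin n → ℝ) (lam : ℝ) (θ : ℝ) : ℝ :=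
  (n : ℝ) / θ + ∑ i, Real.log (y i) -
    2 * lam * ∑ i, (y i) ^ θ * Real.log (y i) / (1 + lam - 2 * lam * (y i) ^ θ)

lemma gtld_correction_mem_Ioo {t lam L : ℝ} (ht : 0 < t) (hlam : lam ∈ Set.Ioo (-1 : ℝ) 0)
    (hL : L < 0) :
    2 * lam * (t * L / (1 + lam - 2 * lam * t)) ∈ Set.Ioo 0 (-L) := by
  obtain ⟨hl1, hl0⟩ := hlam
  have hD : 0 < 1 + lam - 2 * lam * t := by nlinarith
  rw [mul_div_assoc', Set.mem_Ioo, lt_div_iff₀ hD, div_lt_iff₀ hD]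
  constructor <;> nlinarith [mul_pos ht (neg_pos.mpr hL)]

lemma psi_eq_sub_sum (n : ℕ) (y : Fin n → ℝ) (lam θ : ℝ) :
    psi n y lam θ = (n : ℝ) / θ + ∑ i, Real.log (y i) -
      ∑ i, 2 * lam * ((y i) ^ θ * Real.log (y i) / (1 + lam - 2 * lam * (y i) ^ θ)) := by
  rw [psi, mul_sum]

lemma pos_div_sub_of_lt_div {a b θ : ℝ} (hb : 0 < b) (hθ : 0 < θ) (h : θ < a / b) :
    0 < a / θ - b := by
  rw [lt_div_iff₀ hb] at h
  rw [sub_pos, lt_div_iff₀ hθ]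
  linarith

lemma div_sub_neg_of_div_lt {a b θ : ℝ} (ha : 0 < a) (hb : 0 < b) (h : a / b < θ) :
    a / θ - b < 0 := by
  have hθ : 0 < θ := (div_pos ha hb).trans h
  rw [div_lt_iff₀ hb] at h
  rw [sub_neg, div_lt_iff₀ hθ]
  linarith

/-- For `λ ∈ (−1,0)`, the score function satisfies the two-sided bound
`n/θ + 2Σ log yᵢ < ψ(θ) < n/θ + Σ log yᵢ` for every `θ > 0`; consequently
`ψ(θ) > 0` for `0 < θ < n/(−2Σ log yᵢ)` and `ψ(θ) < 0` for
`θ > n/(−Σ log yᵢ)`. -/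
theorem gtld_score_bounds (n : ℕ) (hn : 1 ≤ n) (y : Fin n → ℝ)
    (hy : ∀ i, y i ∈ Set.Ioo (0 : ℝ) 1) (lam : ℝ)
    (hlam : lam ∈ Set.Ioo (-1 : ℝ) 0) :
    (∀ θ : ℝ, 0 < θ →
        (n : ℝ) / θ + 2 * ∑ i, Real.log (y i) < psi n y lam θ ∧
          psi n y lam θ < (n : ℝ) / θ + ∑ i, Real.log (y i)) ∧
      (∀ θ : ℝ, 0 < θ → θ < (n : ℝ) / (-2 * ∑ i, Real.log (y i)) →
        0 < psi n y lam θ) ∧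
      (∀ θ : ℝ, (n : ℝ) / (-∑ i, Real.log (y i)) < θ →
        psi n y lam θ < 0) := by
  have hne : (univ : Finset (Fin n)).Nonempty := univ_nonempty_iff.mpr ⟨⟨0, hn⟩⟩
  have hlog (i : Fin n) : Real.log (y i) < 0 := Real.log_neg (hy i).1 (hy i).2
  have hS : ∑ i, Real.log (y i) < 0 := sum_neg (fun i _ ↦ hlog i) hne
  have bounds (θ : ℝ) (hθ : 0 < θ) :
      (n : ℝ) / θ + 2 * ∑ i, Real.log (y i) < psi n y lam θ ∧
        psi n y lam θ < (n : ℝ) / θ + ∑ i, Real.log (y i) := by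
    have hc (i : Fin n) := gtld_correction_mem_Ioo (rpow_pos_of_pos (hy i).1 θ) hlam (hlog i)
    have hpos := sum_pos (fun i _ ↦ (hc i).1) hne
    have hlt := sum_lt_sum_of_nonempty hne (fun i _ ↦ (hc i).2)
    rw [sum_neg_distrib] at hlt
    rw [psi_eq_sub_sum]
    constructor <;> linarith
  refine ⟨bounds, fun θ hθ hlt ↦ ?_, fun θ hlt ↦ ?_⟩
  · have := pos_div_sub_of_lt_div (by linarith) hθ hlt
    linarith [(bounds θ hθ).1]
  · have hn' : (0 : ℝ) < n := by exact_mod_cast hn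
    have hθ : 0 < θ := (div_pos hn' (neg_pos.mpr hS)).trans hlt
    have := div_sub_neg_of_div_lt hn' (neg_pos.mpr hS) hlt
    linarith [(bounds θ hθ).2]
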